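/- With P, A, B as in the noncommutative sphere example (Δ_R(xⱼ) = xⱼ ⊗ (1 − 2δ), Σᵢ aᵢxᵢ² = r², P = B ⊕ Σⱼ B·xⱼ), the canonical map T_B : P ⊗_B P → P ⊗ A, p ⊗_B q ↦ p q₍₀₎ ⊗ q₍₁₎, is bijective, with inverse the unique left P-module map sending 1 ⊗ 1 ↦ 1 ⊗_B 1 and 1 ⊗ δ ↦ ½(1 ⊗_B 1 − r⁻² Σᵢ aᵢ xᵢ ⊗_B xᵢ). -/

import Mathlib

open TensorProduct

/-- The Hopf algebra `A = Map(ℤ/2, ℂ)` of functions on `ℤ/2` (as an algebra). -/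
abbrev MapZ2 : Type := ZMod 2 → ℂ

/-- `δ ∈ A`: the indicator function of the nontrivial element of `ℤ/2`. -/
noncomputable def deltaFn : MapZ2 := fun z => if z = 1 then 1 else 0

/-- The canonical map `T_R : P ⊗ P → P ⊗ A`, `p ⊗ q ↦ p·q₍₀₎ ⊗ q₍₁₎`. -/
noncomputable def TRmap {P : Type*} [Ring P] [Algebra ℂ P]
    (ΔR : P →ₐ[ℂ] P ⊗[ℂ] MapZ2) : P ⊗[ℂ] P →ₗ[ℂ] P ⊗[ℂ] MapZ2 :=
  (LinearMap.rTensor MapZ2 (LinearMap.mul' ℂ P)) ∘ₗ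
    (TensorProduct.assoc ℂ P P MapZ2).symm.toLinearMap ∘ₗ
      (LinearMap.lTensor P ΔR.toLinearMap)

/-- The balancing relations over the coinvariants `B = P^{co A}`, so that
`P ⊗_B P = (P ⊗ P)/K`. -/
def balK {P : Type*} [Ring P] [Algebra ℂ P]
    (ΔR : P →ₐ[ℂ] P ⊗[ℂ] MapZ2) : Submodule ℂ (P ⊗[ℂ] P) :=
  Submodule.span ℂ {y : P ⊗[ℂ] P | ∃ (p q b : P), ΔR b = b ⊗ₜ[ℂ] (1 : MapZ2) ∧
    y = (p * b) ⊗ₜ[ℂ] q - p ⊗ₜ[ℂ] (b * q)}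

/-- The "even part" `B`: the span of products of even numbers of the
generators. -/
def evenPart {P : Type*} [Ring P] [Algebra ℂ P] (x : Fin 3 → P) :
    Submodule ℂ P :=
  Submodule.span ℂ {p : P | ∃ L : List (Fin 3), Even L.length ∧ p = (L.map x).prod}

/-!
Write `w = 1 - 2δ`; it is grouplike with `w² = 1`, and every `g ∈ A` is
`((g 0 + g 1)/2) • 1 + ((g 0 - g 1)/2) • w`. Since `Δ_R(xᵢ) = xᵢ ⊗ w` and `Σ aᵢ xᵢ² = r²`,
the element `r⁻² Σ aᵢ p xᵢ ⊗ xᵢ` is sent by the canonical map to `p ⊗ w`, which gives a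
right inverse `P ⊗ A → P ⊗_B P`. It is also a left inverse: every `q ∈ P` splits as
`q₀ + q₁` with `Δ_R q₀ = q₀ ⊗ 1` and `Δ_R q₁ = q₁ ⊗ w`, and for the odd part the products
`q₁ xᵢ` are coinvariant, so they can be moved across `⊗_B`, after which the sphere relation
collapses `r⁻² Σ aᵢ q₁ xᵢ xᵢ` back to `q₁`.
-/

noncomputable def sgnFn : MapZ2 := 1 - 2 * deltaFn

theorem deltaFn_zero : deltaFn 0 = 0 := by simp [deltaFn]

theorem deltaFn_one : deltaFn 1 = 1 := by simp [deltaFn]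

theorem sgnFn_zero : sgnFn 0 = 1 := by simp [sgnFn, deltaFn_zero]

theorem sgnFn_one : sgnFn 1 = -1 := by norm_num [sgnFn, deltaFn_one]

theorem MapZ2.ext {g g' : MapZ2} (h0 : g 0 = g' 0) (h1 : g 1 = g' 1) : g = g' := by
  ext z
  fin_cases z
  exacts [h0, h1]

theorem sgnFn_mul_self : sgnFn * sgnFn = 1 :=
  MapZ2.ext (by simp [sgnFn_zero]) (by simp [sgnFn_one])

theorem eq_smul_one_add_smul_sgnFn (g : MapZ2) :
    g = ((g 0 + g 1) / 2) • (1 : MapZ2) + ((g 0 - g 1) / 2) • sgnFn :=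
  MapZ2.ext (by simp [sgnFn_zero]; ring) (by simp [sgnFn_one]; ring)

section Coaction

variable {P : Type*} [Ring P] [Algebra ℂ P] (ΔR : P →ₐ[ℂ] P ⊗[ℂ] MapZ2)

theorem TRmap_tmul (p : P) {q q' : P} {g : MapZ2} (h : ΔR q = q' ⊗ₜ[ℂ] g) :
    TRmap ΔR (p ⊗ₜ[ℂ] q) = (p * q') ⊗ₜ[ℂ] g := by
  simp [TRmap, h]

theorem TRmap_tmul_one (p : P) : TRmap ΔR (p ⊗ₜ[ℂ] 1) = p ⊗ₜ[ℂ] 1 := by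
  rw [TRmap_tmul ΔR p (by rw [map_one, Algebra.TensorProduct.one_def]), mul_one]

variable {ΔR} in
theorem mkQ_mul_tmul_eq_tmul_mul {b : P} (hb : ΔR b = b ⊗ₜ[ℂ] 1) (p q : P) :
    (balK ΔR).mkQ ((p * b) ⊗ₜ[ℂ] q) = (balK ΔR).mkQ (p ⊗ₜ[ℂ] (b * q)) := by
  rw [Submodule.mkQ_apply, Submodule.mkQ_apply, Submodule.Quotient.eq]
  exact Submodule.subset_span ⟨p, q, b, hb, rfl⟩

end Coaction

section Sphere

variable {P : Type*} [Ring P] [Algebra ℂ P] {ι : Type*} [Fintype ι]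
  (x : ι → P) (a : ι → ℂ) (c : ℂ)

noncomputable def sphereLift : P →ₗ[ℂ] P ⊗[ℂ] P :=
  c⁻¹ • ∑ i, a i • ((TensorProduct.mk ℂ P P).flip (x i) ∘ₗ LinearMap.mulRight ℂ (x i))

theorem sphereLift_apply (p : P) :
    sphereLift x a c p = c⁻¹ • ∑ i, (a i • (p * x i)) ⊗ₜ[ℂ] x i := by
  simp [sphereLift, smul_tmul']

/-- The candidate inverse of the Galois map, before passing to `P ⊗_B P`. -/
noncomputable def galoisInvLift : P ⊗[ℂ] MapZ2 →ₗ[ℂ] P ⊗[ℂ] P :=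
  TensorProduct.lift <| LinearMap.mk₂ ℂ
    (fun p g => ((g 0 + g 1) / 2) • p ⊗ₜ[ℂ] (1 : P) + ((g 0 - g 1) / 2) • sphereLift x a c p)
    (by intro p p' g; simp only [add_tmul, map_add]; module)
    (by intro s p g; simp only [← smul_tmul', map_smul]; module)
    (by intro p g g'; simp only [Pi.add_apply]; module)
    (by intro s p g; simp only [Pi.smul_apply, smul_eq_mul]; module)

theorem galoisInvLift_tmul (p : P) (g : MapZ2) :
    galoisInvLift x a c (p ⊗ₜ[ℂ] g) =
      ((g 0 + g 1) / 2) • p ⊗ₜ[ℂ] (1 : P) + ((g 0 - g 1) / 2) • sphereLift x a c p :=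
  rfl

theorem galoisInvLift_tmul_one (p : P) : galoisInvLift x a c (p ⊗ₜ[ℂ] 1) = p ⊗ₜ[ℂ] 1 := by
  rw [galoisInvLift_tmul]
  norm_num

theorem galoisInvLift_tmul_sgnFn (p : P) :
    galoisInvLift x a c (p ⊗ₜ[ℂ] sgnFn) = sphereLift x a c p := by
  rw [galoisInvLift_tmul, sgnFn_zero, sgnFn_one]
  norm_num

theorem galoisInvLift_tmul_deltaFn (p : P) :
    galoisInvLift x a c (p ⊗ₜ[ℂ] deltaFn) =
      (1 / 2 : ℂ) • (p ⊗ₜ[ℂ] 1 - sphereLift x a c p) := by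
  rw [galoisInvLift_tmul, deltaFn_zero, deltaFn_one]
  module

variable {x a c} (hsphere : ∑ i, a i • x i ^ 2 = algebraMap ℂ P c) (hc : c ≠ 0)
include hsphere hc

theorem inv_smul_sum_mul_mul_eq (q : P) : c⁻¹ • ∑ i, a i • (q * x i * x i) = q := by
  have : ∑ i, a i • (q * x i * x i) = q * ∑ i, a i • x i ^ 2 := by
    simp only [Finset.mul_sum, mul_smul_comm, sq, mul_assoc]
  rw [this, hsphere, ← Algebra.commutes, ← Algebra.smul_def, inv_smul_smul₀ hc]

variable {ΔR : P →ₐ[ℂ] P ⊗[ℂ] MapZ2} (hx : ∀ i, ΔR (x i) = x i ⊗ₜ[ℂ] sgnFn)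
include hx

theorem TRmap_sphereLift (p : P) : TRmap ΔR (sphereLift x a c p) = p ⊗ₜ[ℂ] sgnFn := by
  simp only [sphereLift_apply, map_smul, map_sum, TRmap_tmul ΔR _ (hx _), smul_mul_assoc,
    smul_tmul', ← sum_tmul]
  rw [inv_smul_sum_mul_mul_eq hsphere hc]

theorem TRmap_galoisInvLift (y : P ⊗[ℂ] MapZ2) : TRmap ΔR (galoisInvLift x a c y) = y := by
  induction y with
  | zero => simp
  | add y y' hy hy' => rw [map_add, map_add, hy, hy']
  | tmul p g =>
    rw [galoisInvLift_tmul, map_add, map_smul, map_smul, TRmap_tmul_one,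
      TRmap_sphereLift hsphere hc hx, ← tmul_smul, ← tmul_smul, ← tmul_add,
      ← eq_smul_one_add_smul_sgnFn]

/-- Each `q * x i` is coinvariant since `sgnFn * sgnFn = 1`, so it can be moved across `⊗_B`. -/
theorem mkQ_sphereLift_mul {q : P} (hq : ΔR q = q ⊗ₜ[ℂ] sgnFn) (p : P) :
    (balK ΔR).mkQ (sphereLift x a c (p * q)) = (balK ΔR).mkQ (p ⊗ₜ[ℂ] q) := by
  have hqx : ∀ i, ΔR (q * x i) = (q * x i) ⊗ₜ[ℂ] 1 := fun i => by
    rw [map_mul, hq, hx, Algebra.TensorProduct.tmul_mul_tmul, sgnFn_mul_self]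
  have hmove : ∀ i, (balK ΔR).mkQ ((p * q * x i) ⊗ₜ[ℂ] x i) =
      (balK ΔR).mkQ (p ⊗ₜ[ℂ] (q * x i * x i)) := fun i => by
    rw [mul_assoc p, mkQ_mul_tmul_eq_tmul_mul (hqx i)]
  rw [sphereLift_apply, map_smul, map_sum]
  simp only [← smul_tmul', map_smul, hmove]
  simp only [← map_smul, ← map_sum, ← tmul_smul, ← tmul_sum]
  rw [inv_smul_sum_mul_mul_eq hsphere hc]

theorem mkQ_galoisInvLift_TRmap
    (hsplit : ∀ q : P, ∃ q₀ q₁ : P, q = q₀ + q₁ ∧ ΔR q₀ = q₀ ⊗ₜ[ℂ] 1 ∧ ΔR q₁ = q₁ ⊗ₜ[ℂ] sgnFn)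
    (y : P ⊗[ℂ] P) : (balK ΔR).mkQ (galoisInvLift x a c (TRmap ΔR y)) = (balK ΔR).mkQ y := by
  induction y with
  | zero => simp
  | add y y' hy hy' => rw [map_add, map_add, map_add, hy, hy', map_add]
  | tmul p q =>
    obtain ⟨q₀, q₁, rfl, hq₀, hq₁⟩ := hsplit q
    rw [tmul_add, map_add, map_add, map_add, map_add, TRmap_tmul ΔR p hq₀,
      TRmap_tmul ΔR p hq₁, galoisInvLift_tmul_one, galoisInvLift_tmul_sgnFn,
      mkQ_sphereLift_mul hsphere hc hx hq₁, mkQ_mul_tmul_eq_tmul_mul hq₀, mul_one]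

end Sphere

theorem exists_coinvariant_add_odd {P : Type*} [Ring P] [Algebra ℂ P] {x : Fin 3 → P}
    {ΔR : P →ₐ[ℂ] P ⊗[ℂ] MapZ2} (hx : ∀ j, ΔR (x j) = x j ⊗ₜ[ℂ] sgnFn)
    (hdec : ∀ p : P, ∃ b : Fin 4 → P, (∀ i, b i ∈ evenPart x) ∧
      p = b 0 + ∑ j : Fin 3, b j.succ * x j)
    (heven : ∀ p : P, p ∈ evenPart x → ΔR p = p ⊗ₜ[ℂ] (1 : MapZ2)) (q : P) :
    ∃ q₀ q₁ : P, q = q₀ + q₁ ∧ ΔR q₀ = q₀ ⊗ₜ[ℂ] 1 ∧ ΔR q₁ = q₁ ⊗ₜ[ℂ] sgnFn := by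
  obtain ⟨b, hb, rfl⟩ := hdec q
  refine ⟨b 0, _, rfl, heven _ (hb 0), ?_⟩
  simp only [map_sum, map_mul, heven _ (hb _), hx, Algebra.TensorProduct.tmul_mul_tmul, one_mul,
    ← sum_tmul]

theorem stmt13_general {P : Type*} [Ring P] [Algebra ℂ P]
    (x : Fin 3 → P) (a : Fin 3 → ℝ) (r : ℝ)
    (hr : 0 < r)
    (hsphere : ∑ j, ((a j : ℂ)) • (x j) ^ 2 = algebraMap ℂ P ((r : ℂ) ^ 2))
    (ΔR : P →ₐ[ℂ] P ⊗[ℂ] MapZ2)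
    (hΔ : ∀ j, ΔR (x j) = (x j) ⊗ₜ[ℂ] (1 - 2 * deltaFn))
    (hdec : ∀ p : P, ∃ b : Fin 4 → P, (∀ i, b i ∈ evenPart x) ∧
      p = b 0 + ∑ j : Fin 3, b j.succ * x j)
    (heven : ∀ p : P, p ∈ evenPart x → ΔR p = p ⊗ₜ[ℂ] (1 : MapZ2))
    (TB : ((P ⊗[ℂ] P) ⧸ (balK ΔR)) →ₗ[ℂ] P ⊗[ℂ] MapZ2)
    (hTB : ∀ y : P ⊗[ℂ] P, TB ((balK ΔR).mkQ y) = TRmap ΔR y) :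
    Function.Bijective TB ∧
      ∃ F : (P ⊗[ℂ] MapZ2) →ₗ[ℂ] ((P ⊗[ℂ] P) ⧸ (balK ΔR)),
        (∀ z, F (TB z) = z) ∧ (∀ y, TB (F y) = y) ∧
        (∀ p : P, F (p ⊗ₜ[ℂ] (1 : MapZ2)) = (balK ΔR).mkQ (p ⊗ₜ[ℂ] (1 : P))) ∧
        (∀ p : P, F (p ⊗ₜ[ℂ] deltaFn) =
          (balK ΔR).mkQ ((1/2 : ℂ) • (p ⊗ₜ[ℂ] (1 : P) -
            ((r : ℂ) ^ 2)⁻¹ • ∑ i, ((a i : ℂ) • (p * x i)) ⊗ₜ[ℂ] (x i)))) := by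
  have hc : ((r : ℂ) ^ 2) ≠ 0 := pow_ne_zero 2 (by exact_mod_cast hr.ne')
  let F := (balK ΔR).mkQ ∘ₗ galoisInvLift x (fun i => (a i : ℂ)) ((r : ℂ) ^ 2)
  have hFTB : Function.LeftInverse F TB := by
    intro z
    obtain ⟨y, rfl⟩ := Submodule.mkQ_surjective _ z
    rw [hTB]
    exact mkQ_galoisInvLift_TRmap hsphere hc hΔ (exists_coinvariant_add_odd hΔ hdec heven) y
  have hTBF : Function.RightInverse F TB := fun y => by
    rw [LinearMap.comp_apply, hTB, TRmap_galoisInvLift hsphere hc hΔ]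
  refine ⟨⟨hFTB.injective, hTBF.surjective⟩, F, hFTB, hTBF, fun p => ?_, fun p => ?_⟩
  · rw [LinearMap.comp_apply, galoisInvLift_tmul_one]
  · rw [LinearMap.comp_apply, galoisInvLift_tmul_deltaFn, sphereLift_apply]

/-- for the noncommutative sphere bundle, the canonical Galois map
`T_B : P ⊗_B P → P ⊗ A` is bijective, with inverse the (unique) left `P`-module
map sending `1 ⊗ 1 ↦ 1 ⊗_B 1` and
`1 ⊗ δ ↦ ½(1 ⊗_B 1 − r⁻² Σᵢ aᵢ xᵢ ⊗_B xᵢ)`. -/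
theorem stmt13 {P : Type*} [Ring P] [Algebra ℂ P]
    (x : Fin 3 → P) (a : Fin 3 → ℝ) (r : ℝ)
    (ha : ∀ j, 0 < a j) (hr : 0 < r)
    (hsphere : ∑ j, ((a j : ℂ)) • (x j) ^ 2 = algebraMap ℂ P ((r : ℂ) ^ 2))
    (ΔR : P →ₐ[ℂ] P ⊗[ℂ] MapZ2)
    (hΔ : ∀ j, ΔR (x j) = (x j) ⊗ₜ[ℂ] (1 - 2 * deltaFn))
    (hdec : ∀ p : P, ∃ b : Fin 4 → P, (∀ i, b i ∈ evenPart x) ∧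
      p = b 0 + ∑ j : Fin 3, b j.succ * x j)
    (heven : ∀ p : P, p ∈ evenPart x → ΔR p = p ⊗ₜ[ℂ] (1 : MapZ2))
    (TB : ((P ⊗[ℂ] P) ⧸ (balK ΔR)) →ₗ[ℂ] P ⊗[ℂ] MapZ2)
    (hTB : ∀ y : P ⊗[ℂ] P, TB ((balK ΔR).mkQ y) = TRmap ΔR y) :
    Function.Bijective TB ∧
      ∃ F : (P ⊗[ℂ] MapZ2) →ₗ[ℂ] ((P ⊗[ℂ] P) ⧸ (balK ΔR)),
        (∀ z, F (TB z) = z) ∧ (∀ y, TB (F y) = y) ∧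
        (∀ p : P, F (p ⊗ₜ[ℂ] (1 : MapZ2)) = (balK ΔR).mkQ (p ⊗ₜ[ℂ] (1 : P))) ∧
        (∀ p : P, F (p ⊗ₜ[ℂ] deltaFn) =
          (balK ΔR).mkQ ((1/2 : ℂ) • (p ⊗ₜ[ℂ] (1 : P) -
            ((r : ℂ) ^ 2)⁻¹ • ∑ i, ((a i : ℂ) • (p * x i)) ⊗ₜ[ℂ] (x i)))) :=
  stmt13_general x a r hr hsphere ΔR hΔ hdec heven TB hTB
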